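/- arXiv:1405.1887 — 3 statements merged into one kernel-verified Lean document; each statement's English description precedes it below -/
import Mathlib

section
/- Let f : S ⥤ T be an exact functor of triangulated categories admitting an exact right adjoint g : T ⥤ S such that the counit f ∘ g ⟶ id_T is an isomorphism. Then the induced functor from the Verdier quotient S/ker(f) to T is an equivalence of categories. -/
/-!
Since `f` is triangulated, a morphism has its cone in `ker f` exactly when `f` sends it to an
isomorphism. And a left adjoint whose counit is an isomorphism (i.e. whose right adjoint is fully
faithful) is a localization at the morphisms it inverts.
-/

open CategoryTheory CategoryTheory.Limits CategoryTheory.Pretriangulated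

universe v u u'

namespace CategoryTheory

lemma Adjunction.isLocalization_of_isIso_counit {C₁ C₂ : Type*} [Category C₁] [Category C₂]
    {F : C₁ ⥤ C₂} {G : C₂ ⥤ C₁} (adj : F ⊣ G) [IsIso adj.counit] :
    F.IsLocalization ((MorphismProperty.isomorphisms C₂).inverseImage F) := by
  have hG : G.FullyFaithful := adj.fullyFaithfulROfIsIsoCounit
  have := hG.full
  have := hG.faithful
  exact adj.isLocalization

section

variable {C D : Type*} [Category C] [Category D] [HasZeroObject C] [HasZeroObject D]
  [Preadditive C] [Preadditive D] [HasShift C ℤ] [HasShift D ℤ]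
  [∀ n : ℤ, (shiftFunctor C n).Additive] [∀ n : ℤ, (shiftFunctor D n).Additive]
  [Pretriangulated C] [Pretriangulated D] (F : C ⥤ D) [F.CommShift ℤ] [F.IsTriangulated]

lemma Functor.isZero_obj_obj₃_iff_isIso_map_mor₁ {T : Triangle C} (hT : T ∈ distTriang C) :
    IsZero (F.obj T.obj₃) ↔ IsIso (F.map T.mor₁) :=
  Triangle.isZero₃_iff_isIso₁ _ (F.map_distinguished _ hT)

lemma ObjectProperty.trW_eq_inverseImage_isomorphisms (P : ObjectProperty C)
    (hP : ∀ X, P X ↔ IsZero (F.obj X)) :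
    P.trW = (MorphismProperty.isomorphisms D).inverseImage F := by
  ext X Y s
  constructor
  · rintro ⟨Z, g, h, hT, hZ⟩
    exact (F.isZero_obj_obj₃_iff_isIso_map_mor₁ hT).1 ((hP Z).1 hZ)
  · intro hs
    obtain ⟨Z, g, h, hT⟩ := distinguished_cocone_triangle s
    exact ⟨Z, g, h, hT, (hP Z).2 ((F.isZero_obj_obj₃_iff_isIso_map_mor₁ hT).2 hs)⟩

end

end CategoryTheory

/-- Let `f : S ⥤ T` be an exact functor of triangulated categories admitting an
exact right adjoint `g : T ⥤ S` such that the counit `f ∘ g ⟶ id_T` is an isomorphism. Then the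
induced functor from the Verdier quotient `S/ker f` to `T` is an equivalence; equivalently, `f`
is a localization functor with respect to the class `W` of morphisms whose cone lies in the
kernel `K = ker f` (the full triangulated subcategory of objects killed by `f`). -/
theorem verdier_quotient_by_kernel_equivalence
    {S : Type u} {T : Type u'} [Category.{v} S] [Category.{v} T]
    [HasZeroObject S] [HasZeroObject T] [Preadditive S] [Preadditive T]
    [HasShift S ℤ] [HasShift T ℤ]
    [∀ n : ℤ, (CategoryTheory.shiftFunctor S n).Additive]
    [∀ n : ℤ, (CategoryTheory.shiftFunctor T n).Additive]
    [Pretriangulated S] [Pretriangulated T]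
    (f : S ⥤ T) (g : T ⥤ S)
    [f.CommShift ℤ] [f.IsTriangulated] [g.CommShift ℤ] [g.IsTriangulated]
    (adj : f ⊣ g) (hcounit : IsIso adj.counit)
    (K : ObjectProperty S) [K.IsTriangulated]
    (hK : ∀ x : S, K x ↔ IsZero (f.obj x)) :
    f.IsLocalization K.trW := by
  rw [K.trW_eq_inverseImage_isomorphisms f hK]
  exact adj.isLocalization_of_isIso_counit
end

section
/- Let (R, 𝔪, κ) be a commutative local ring and P a perfect complex over R. Then P ≅ 0 in D(R) if and only if P ⊗^L_R κ ≅ 0 in D(κ). -/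
/-!
Descending from the top degree: if `P` is exact at `n + 1` and the cycles `Zⁿ⁺¹ = ker dⁿ⁺¹` form a
direct summand of the projective `Pⁿ⁺¹`, then `dⁿ : Pⁿ ↠ Zⁿ⁺¹` is a surjection onto a projective
module, so `Zⁿ` is a direct summand of `Pⁿ`. If `P` is exact, the image of every differential is
therefore a direct summand, and right exactness of `- ⊗ M` shows that `P ⊗ M` stays exact.
Conversely, if `P ⊗ κ` is exact at `n` and `Zⁿ` is a summand, then `Pⁿ⁻¹ → Zⁿ` is surjective
after `- ⊗ κ`, hence surjective by Nakayama's lemma since `Zⁿ` is finite.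
-/

open CategoryTheory CategoryTheory.Limits CategoryTheory.MonoidalCategory

universe u

open Function LinearMap TensorProduct

section LinearAlgebra

variable {R X Y Z : Type*} [CommRing R] [AddCommGroup X] [Module R X]
  [AddCommGroup Y] [Module R Y] [AddCommGroup Z] [Module R Z]

theorem LinearMap.isComplemented_ker_of_surjective [Module.Projective R Z] (g : Y →ₗ[R] Z)
    (hg : Surjective g) : IsComplemented (ker g) := by
  obtain ⟨π, hπ⟩ := ((exact_subtype_ker_map g).split_tfae (ker g).injective_subtype hg).out 0 1
    |>.mp (Module.projective_lifting_property g LinearMap.id hg)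
  exact ⟨_, isCompl_of_proj (LinearMap.congr_fun hπ)⟩

theorem Submodule.exists_retraction_of_isComplemented {p : Submodule R Y}
    (hp : IsComplemented p) : ∃ π : Y →ₗ[R] p, π ∘ₗ p.subtype = LinearMap.id :=
  surjective_comp_subtype_of_isComplemented hp LinearMap.id

theorem Module.Projective.of_isComplemented [Module.Projective R Y] {p : Submodule R Y}
    (hp : IsComplemented p) : Module.Projective R p :=
  have ⟨π, hπ⟩ := Submodule.exists_retraction_of_isComplemented hp
  .of_split p.subtype π hπ

theorem Module.Finite.of_isComplemented [Module.Finite R Y] {p : Submodule R Y}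
    (hp : IsComplemented p) : Module.Finite R p :=
  have ⟨π, hπ⟩ := Submodule.exists_retraction_of_isComplemented hp
  .of_surjective π fun x => ⟨x, LinearMap.congr_fun hπ x⟩

theorem Submodule.rTensor_subtype_injective_of_isComplemented {p : Submodule R Y}
    (hp : IsComplemented p) (M : Type*) [AddCommGroup M] [Module R M] :
    Injective (p.subtype.rTensor M) := by
  obtain ⟨π, hπ⟩ := Submodule.exists_retraction_of_isComplemented hp
  refine LeftInverse.injective (g := π.rTensor M) fun x => ?_
  rw [← LinearMap.comp_apply, ← rTensor_comp, hπ, rTensor_id, LinearMap.id_apply]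

theorem Function.Exact.rTensor_of_isComplemented_range {f : X →ₗ[R] Y} {g : Y →ₗ[R] Z}
    (hfg : Exact f g) (hg : IsComplemented (range g)) (M : Type*) [AddCommGroup M] [Module R M] :
    Exact (f.rTensor M) (g.rTensor M) := by
  have hfg' : Exact f g.rangeRestrict := by rwa [exact_iff, ker_rangeRestrict, ← exact_iff]
  rw [show g = (range g).subtype ∘ₗ g.rangeRestrict from rfl, rTensor_comp,
    (Submodule.rTensor_subtype_injective_of_isComplemented hg M).comp_exact_iff_exact]
  exact rTensor_exact M hfg' g.surjective_rangeRestrict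

end LinearAlgebra

section LocalRing

variable {R X Y Z : Type*} [CommRing R] [IsLocalRing R] [AddCommGroup X] [Module R X]
  [AddCommGroup Y] [Module R Y] [AddCommGroup Z] [Module R Z]

open IsLocalRing

theorem IsLocalRing.surjective_of_surjective_rTensor_residueField [Module.Finite R Y]
    (f : X →ₗ[R] Y) (h : Surjective (f.rTensor (ResidueField R))) : Surjective f := by
  refine f.surjective_of_surjective_comp_mkQ (maximalIdeal R)
    (jacobson_eq_maximalIdeal ⊥ bot_ne_top).ge fun y => ?_
  obtain ⟨t, ht⟩ := h ((tensorQuotEquivQuotSMul Y (maximalIdeal R)).symm y)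
  obtain ⟨x, hx⟩ := Submodule.mkQ_surjective _ (tensorQuotEquivQuotSMul X (maximalIdeal R) t)
  refine ⟨x, (tensorQuotEquivQuotSMul Y (maximalIdeal R)).symm.injective ?_⟩
  rw [← ht, (tensorQuotEquivQuotSMul X (maximalIdeal R)).eq_symm_apply.mpr hx.symm]
  rfl

theorem Function.Exact.of_rTensor_residueField [Module.Finite R Y] {f : X →ₗ[R] Y}
    {g : Y →ₗ[R] Z} (hgf : g ∘ₗ f = 0) (hg : IsComplemented (ker g))
    (h : Exact (f.rTensor (ResidueField R)) (g.rTensor (ResidueField R))) : Exact f g := by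
  set k := ResidueField R
  let f' := f.codRestrict (ker g) fun x => congr($hgf x)
  have hf : f = (ker g).subtype ∘ₗ f' := rfl
  have hι := Submodule.rTensor_subtype_injective_of_isComplemented hg k
  have : Module.Finite R (ker g) := .of_isComplemented hg
  have hf' : Surjective (f'.rTensor k) := fun w => by
    obtain ⟨y, hy⟩ := (h _).mp (by
      rw [← LinearMap.comp_apply, ← rTensor_comp, (exact_subtype_ker_map g).linearMap_comp_eq_zero,
        rTensor_zero, LinearMap.zero_apply] : g.rTensor k ((ker g).subtype.rTensor k w) = 0)
    exact ⟨y, hι (by rw [← hy, hf, rTensor_comp, LinearMap.comp_apply])⟩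
  rw [exact_iff, hf, range_comp, range_eq_top.mpr (surjective_of_surjective_rTensor_residueField
    f' hf'), Submodule.map_top, Submodule.range_subtype]

end LocalRing

theorem Int.forall_of_forall_gt_of_succ {p : ℤ → Prop} (b : ℤ) (hb : ∀ n, b < n → p n)
    (step : ∀ n, p (n + 1) → p n) (n : ℤ) : p n := by
  rcases lt_or_ge b n with hn | hn
  · exact hb n hn
  induction n, hn using Int.leInductionDown with
  | base => exact step b (hb _ (lt_add_one b))
  | pred n _ ih => exact step _ (by rwa [sub_add_cancel])

namespace CochainComplex

variable {R : Type u} [CommRing R] (P : CochainComplex (ModuleCat.{u} R) ℤ)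

theorem exactAt_iff_exact_d {i j k : ℤ} (hij : i + 1 = j) (hjk : j + 1 = k) :
    P.ExactAt j ↔ Exact (P.d i j).hom (P.d j k).hom := by
  rw [P.exactAt_iff' i j k (by simp; omega) (by simp; omega)]
  exact ShortComplex.ShortExact.moduleCat_exact_iff_function_exact _

theorem exactAt_mapTensorRight_iff (M : ModuleCat.{u} R) {i j k : ℤ} (hij : i + 1 = j)
    (hjk : j + 1 = k) :
    (((tensorRight M).mapHomologicalComplex (ComplexShape.up ℤ)).obj P).ExactAt j ↔
      Exact ((P.d i j).hom.rTensor M) ((P.d j k).hom.rTensor M) :=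
  exactAt_iff_exact_d _ hij hjk

theorem d_comp_d_hom (i j k : ℤ) : (P.d j k).hom ∘ₗ (P.d i j).hom = 0 := by
  rw [← ModuleCat.hom_comp, P.d_comp_d, ModuleCat.hom_zero]

theorem isComplemented_ker_d_of_isZero {n : ℤ} (hn : IsZero (P.X n)) :
    IsComplemented (ker (P.d n (n + 1)).hom) := by
  rw [hn.eq_of_src (P.d n (n + 1)) 0, ModuleCat.hom_zero, ker_zero]
  exact isComplemented_top

theorem isComplemented_ker_d_of_exactAt (n : ℤ) [Module.Projective R (P.X (n + 1))]
    (hexact : P.ExactAt (n + 1)) (hker : IsComplemented (ker (P.d (n + 1) (n + 1 + 1)).hom)) :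
    IsComplemented (ker (P.d n (n + 1)).hom) := by
  have hfg := (P.exactAt_iff_exact_d rfl rfl).mp hexact
  have := Module.Projective.of_isComplemented hker
  have hg : Surjective ((P.d n (n + 1)).hom.codRestrict (ker (P.d (n + 1) (n + 1 + 1)).hom)
      fun x => hfg.apply_apply_eq_zero x) := fun ⟨y, hy⟩ =>
    let ⟨x, hx⟩ := (hfg y).mp hy
    ⟨x, Subtype.ext hx⟩
  convert isComplemented_ker_of_surjective _ hg using 1
  exact (ker_codRestrict _ _ _).symm

theorem exactAt_of_exactAt_mapTensorRight_residueField [IsLocalRing R] (n : ℤ)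
    [Module.Finite R (P.X n)]
    (hQ : (((tensorRight (ModuleCat.of R (IsLocalRing.ResidueField R))).mapHomologicalComplex
      (ComplexShape.up ℤ)).obj P).ExactAt n)
    (hker : IsComplemented (ker (P.d n (n + 1)).hom)) : P.ExactAt n := by
  rw [P.exactAt_iff_exact_d (sub_add_cancel n 1) rfl]
  have h := (P.exactAt_mapTensorRight_iff _ (sub_add_cancel n 1) rfl).mp hQ
  exact .of_rTensor_residueField (P.d_comp_d_hom _ _ _) hker h

variable [∀ i, Module.Projective R (P.X i)] {b : ℤ} (hb : ∀ i, b < i → IsZero (P.X i))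
include hb

theorem isComplemented_ker_d_of_acyclic (hP : ∀ n, P.ExactAt n) (n : ℤ) :
    IsComplemented (ker (P.d n (n + 1)).hom) :=
  Int.forall_of_forall_gt_of_succ b (fun n hn => P.isComplemented_ker_d_of_isZero (hb n hn))
    (fun n => P.isComplemented_ker_d_of_exactAt n (hP (n + 1))) n

theorem exactAt_mapTensorRight_of_acyclic (hP : ∀ n, P.ExactAt n) (M : ModuleCat.{u} R) (n : ℤ) :
    (((tensorRight M).mapHomologicalComplex (ComplexShape.up ℤ)).obj P).ExactAt n := by
  have hrange : range (P.d n (n + 1)).hom = ker (P.d (n + 1) (n + 1 + 1)).hom :=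
    ((P.exactAt_iff_exact_d rfl rfl).mp (hP (n + 1))).linearMap_ker_eq.symm
  have hexact := (P.exactAt_iff_exact_d (sub_add_cancel n 1) rfl).mp (hP n)
  rw [P.exactAt_mapTensorRight_iff M (sub_add_cancel n 1) rfl]
  exact hexact.rTensor_of_isComplemented_range
    (hrange ▸ P.isComplemented_ker_d_of_acyclic hb hP (n + 1)) M

theorem exactAt_of_acyclic_mapTensorRight_residueField [IsLocalRing R]
    [∀ i, Module.Finite R (P.X i)]
    (hQ : ∀ n, (((tensorRight (ModuleCat.of R (IsLocalRing.ResidueField R))).mapHomologicalComplex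
      (ComplexShape.up ℤ)).obj P).ExactAt n) (n : ℤ) : P.ExactAt n := by
  suffices ∀ n, P.ExactAt n ∧ IsComplemented (ker (P.d n (n + 1)).hom) from (this n).1
  refine Int.forall_of_forall_gt_of_succ b
    (fun n hn => ⟨.of_isZero (hb n hn), P.isComplemented_ker_d_of_isZero (hb n hn)⟩) ?_
  rintro n ⟨hexact, hker⟩
  have hker' := P.isComplemented_ker_d_of_exactAt n hexact hker
  exact ⟨P.exactAt_of_exactAt_mapTensorRight_residueField n (hQ n) hker', hker'⟩

end CochainComplex

/-- Let `(R, 𝔪, κ)` be a commutative local ring and `P` a perfect complex over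
`R`, realized as a bounded complex of finite free `R`-modules (such complexes are K-flat, so
termwise tensor with `κ` computes the derived fiber `P ⊗^L_R κ`). Then `P ≅ 0` in `D(R)`
(i.e. `P` is acyclic) if and only if `P ⊗^L_R κ ≅ 0` in `D(κ)` (i.e. the termwise tensor
`P ⊗_R κ` is acyclic). -/
theorem perfect_complex_zero_iff_derived_fiber_zero
    (R : Type u) [CommRing R] [IsLocalRing R]
    (P : CochainComplex (ModuleCat.{u} R) ℤ)
    (hbdd : ∃ a b : ℤ, ∀ i : ℤ, (i < a ∨ b < i) → IsZero (P.X i))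
    (hfree : ∀ i : ℤ, Module.Free R (P.X i))
    (hfin : ∀ i : ℤ, Module.Finite R (P.X i)) :
    (∀ n : ℤ, IsZero (P.homology n)) ↔
      (∀ n : ℤ, IsZero
        ((((tensorRight (ModuleCat.of R (IsLocalRing.ResidueField R))).mapHomologicalComplex
          (ComplexShape.up ℤ)).obj P).homology n)) := by
  obtain ⟨_, b, hb⟩ := hbdd
  have hb' : ∀ i, b < i → IsZero (P.X i) := fun i hi => hb i (.inr hi)
  simp only [← HomologicalComplex.exactAt_iff_isZero_homology]
  exact ⟨fun hP => P.exactAt_mapTensorRight_of_acyclic hb' hP _,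
    fun hQ => P.exactAt_of_acyclic_mapTensorRight_residueField hb' hQ⟩
end

section
/- Let R be a dense full triangulated subcategory of an essentially small triangulated category S (i.e., the thick closure of R is all of S). Then for every object s of S, the object s ⊕ Σs belongs to R (up to isomorphism). -/
/-!
Call `x` a direct summand of `R` if `x ⊕ y` is isomorphic to an object of `R` for some `y`.
Adding split triangles to distinguished ones shows that these objects form a
triangulated subcategory, which is closed under isomorphisms and direct summands, so by
density every `s` is one: `s ⊕ y ≅ r` with `r ∈ R`. The cone of `0 ⊕ 𝟙 : s ⊕ y ⟶ s ⊕ y` is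
`s ⊕ Σs`, and both ends of its triangle are isomorphic to `r`, so `s ⊕ Σs ∈ R` up to isomorphism.
-/

open CategoryTheory CategoryTheory.Limits CategoryTheory.Pretriangulated

universe v u

namespace CategoryTheory.Triangulated

/-- Mathlib's former `Triangulated.Subcategory`; its predicate need not be closed under
isomorphisms. -/
structure Subcategory (C : Type*) [Category C] [HasZeroObject C] [HasShift C ℤ]
    [Preadditive C] [∀ n : ℤ, (shiftFunctor C n).Additive] [Pretriangulated C] where
  P : C → Prop
  zero' : ∃ (Z : C) (_ : IsZero Z), P Z
  shift (X : C) (n : ℤ) : P X → P (X⟦n⟧)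
  ext₂' (T : Triangle C) (_ : T ∈ distTriang C) : P T.obj₁ → P T.obj₃ →
    ∃ (Y : C) (_ : P Y), Nonempty (T.obj₂ ≅ Y)

end CategoryTheory.Triangulated

namespace CategoryTheory

open ZeroObject

variable {C : Type*} [Category C]

section Preadditive

variable [Preadditive C]

noncomputable def Limits.piBoolIsoBiprod (f : Bool → C) [HasProduct f]
    [HasBinaryBiproduct (f true) (f false)] :
    (∏ᶜ f) ≅ f true ⊞ f false where
  hom := biprod.lift (Pi.π f true) (Pi.π f false)
  inv := Pi.lift (fun b => Bool.rec biprod.snd biprod.fst b)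
  hom_inv_id := by
    apply Pi.hom_ext
    rintro (_ | _) <;> simp
  inv_hom_id := by
    apply biprod.hom_ext <;> simp

variable [HasBinaryBiproducts C]

def ObjectProperty.directSummandClosure (P : ObjectProperty C) : ObjectProperty C :=
  fun X => ∃ Y, P (X ⊞ Y)

namespace ObjectProperty

variable (P : ObjectProperty C) [P.IsClosedUnderIsomorphisms]

instance : P.directSummandClosure.IsClosedUnderIsomorphisms where
  of_iso e := fun ⟨Y, hY⟩ => ⟨Y, P.prop_of_iso (biprod.mapIso e (Iso.refl Y)) hY⟩

lemma le_directSummandClosure [HasZeroObject C] : P ≤ P.directSummandClosure :=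
  fun _ hX => ⟨0, P.prop_of_iso (isoBiprodZero (isZero_zero C)) hX⟩

lemma directSummandClosure_of_biprod_left {X Y : C} (h : P.directSummandClosure (X ⊞ Y)) :
    P.directSummandClosure X :=
  let ⟨Z, hZ⟩ := h
  ⟨Y ⊞ Z, P.prop_of_iso (biprod.associator X Y Z) hZ⟩

instance [HasZeroObject C] [P.ContainsZero] : P.directSummandClosure.ContainsZero where
  exists_zero := ⟨0, isZero_zero C, P.le_directSummandClosure 0 P.prop_zero⟩

instance [HasShift C ℤ] [∀ n : ℤ, (shiftFunctor C n).Additive] [P.IsStableUnderShift ℤ] :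
    P.directSummandClosure.IsStableUnderShift ℤ where
  isStableUnderShiftBy n := ⟨fun X ⟨Y, hY⟩ => by
    have := preservesBinaryBiproducts_of_preservesBiproducts (shiftFunctor C n)
    exact ⟨Y⟦n⟧, P.prop_of_iso ((shiftFunctor C n).mapBiprod X Y) (P.le_shift n _ hY)⟩⟩

end ObjectProperty

end Preadditive

section Pretriangulated

variable [HasZeroObject C] [HasShift C ℤ] [Preadditive C] [∀ n : ℤ, (shiftFunctor C n).Additive]
  [Pretriangulated C]

lemma Pretriangulated.exists_distTriang_iso_biprod (T₁ T₂ : Triangle C)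
    (h₁ : T₁ ∈ distTriang C) (h₂ : T₂ ∈ distTriang C) :
    ∃ T ∈ distTriang C, Nonempty (T.obj₁ ≅ T₁.obj₁ ⊞ T₂.obj₁) ∧
      Nonempty (T.obj₂ ≅ T₁.obj₂ ⊞ T₂.obj₂) ∧ Nonempty (T.obj₃ ≅ T₁.obj₃ ⊞ T₂.obj₃) := by
  let T : Bool → Triangle C := fun b => cond b T₁ T₂
  exact ⟨productTriangle T, productTriangle_distinguished T (Bool.rec h₂ h₁),
    ⟨piBoolIsoBiprod fun b => (T b).obj₁⟩, ⟨piBoolIsoBiprod fun b => (T b).obj₂⟩,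
    ⟨piBoolIsoBiprod fun b => (T b).obj₃⟩⟩

namespace ObjectProperty

variable (P : ObjectProperty C) [P.IsClosedUnderIsomorphisms]

instance [P.IsTriangulatedClosed₂] : P.directSummandClosure.IsTriangulatedClosed₂ := by
  refine .mk' fun T hT ⟨Y₁, h₁⟩ ⟨Y₃, h₃⟩ => ?_
  obtain ⟨U, hU, ⟨e₁⟩, ⟨e₂⟩, ⟨e₃⟩⟩ := Pretriangulated.exists_distTriang_iso_biprod T _ hT
    (binaryBiproductTriangle_distinguished Y₁ Y₃)
  exact ⟨Y₁ ⊞ Y₃, P.prop_of_iso e₂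
    (P.ext_of_isTriangulatedClosed₂ U hU (P.prop_of_iso e₁.symm h₁) (P.prop_of_iso e₃.symm h₃))⟩

instance [P.IsTriangulated] : P.directSummandClosure.IsTriangulated where

-- `X ⊞ X⟦1⟧` is the cone of `0 ⊞ 𝟙 : X ⊞ Y ⟶ X ⊞ Y`.
lemma prop_biprod_shift_of_prop_biprod [P.IsTriangulatedClosed₃] {X Y : C} (h : P (X ⊞ Y)) :
    P (X ⊞ X⟦(1 : ℤ)⟧) := by
  obtain ⟨U, hU, ⟨e₁⟩, ⟨e₂⟩, ⟨e₃⟩⟩ := Pretriangulated.exists_distTriang_iso_biprod _ _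
    (inv_rot_of_distTriang _ (binaryBiproductTriangle_distinguished X (X⟦(1 : ℤ)⟧)))
    (contractible_distinguished Y)
  have hU₁ : P U.obj₁ :=
    P.prop_of_iso (e₁ ≪≫ biprod.mapIso (shiftShiftNeg X (1 : ℤ)) (Iso.refl Y)).symm h
  have hU₂ : P U.obj₂ := P.prop_of_iso e₂.symm h
  exact P.prop_of_iso (e₃ ≪≫ (isoBiprodZero (isZero_zero C)).symm)
    (P.ext_of_isTriangulatedClosed₃ U hU hU₁ hU₂)

end ObjectProperty

namespace Triangulated.Subcategory

instance (R : Subcategory C) : ObjectProperty.IsTriangulated R.P where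
  exists_zero := let ⟨Z, hZ, hPZ⟩ := R.zero'; ⟨Z, hZ, hPZ⟩
  isStableUnderShiftBy n := ⟨fun X => R.shift X n⟩
  ext₂' := R.ext₂'

def ofIsTriangulated (P : ObjectProperty C) [P.IsTriangulated] : Subcategory C where
  P := P
  zero' := let ⟨Z, hZ, hPZ⟩ := P.exists_prop_of_containsZero; ⟨Z, hZ, hPZ⟩
  shift X n := P.le_shift n X
  ext₂' := P.ext_of_isTriangulatedClosed₂'

end Triangulated.Subcategory

end Pretriangulated

end CategoryTheory

/-- Let `R` be a dense full triangulated subcategory of an essentially small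
triangulated category `S`: the thick closure of `R` (the smallest full triangulated subcategory
of `S` closed under isomorphisms and direct summands containing `R`) is all of `S`. Then for
every object `s` of `S`, the object `s ⊕ Σ s` belongs to `R` up to isomorphism. -/
theorem dense_subcategory_contains_s_oplus_shift_s
    {S : Type u} [Category.{v} S]
    [HasZeroObject S] [Preadditive S] [HasShift S ℤ]
    [∀ n : ℤ, (CategoryTheory.shiftFunctor S n).Additive]
    [Pretriangulated S] [EssentiallySmall.{v} S] [HasBinaryBiproducts S]
    (R : Triangulated.Subcategory S)
    (hdense : ∀ T : Triangulated.Subcategory S,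
      (∀ x y : S, (x ≅ y) → T.P x → T.P y) →
      (∀ x y : S, T.P (x ⊞ y) → T.P x) →
      (∀ x, R.P x → T.P x) → ∀ x, T.P x)
    (s : S) :
    ∃ r : S, R.P r ∧ Nonempty ((s ⊞ s⟦(1 : ℤ)⟧) ≅ r) := by
  let P := ObjectProperty.isoClosure R.P
  obtain ⟨y, hy⟩ : P.directSummandClosure s :=
    hdense (Triangulated.Subcategory.ofIsTriangulated P.directSummandClosure)
      (fun _ _ e => P.directSummandClosure.prop_of_iso e)
      (fun _ _ => P.directSummandClosure_of_biprod_left)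
      (fun x hx => P.le_directSummandClosure x (ObjectProperty.le_isoClosure _ x hx)) s
  obtain ⟨r, hr, e⟩ := P.prop_biprod_shift_of_prop_biprod hy
  exact ⟨r, hr, e⟩
end
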